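/- Doubly robust moment identity (correct propensity model): with Z {0,1}-valued, W a random element, true propensity p(W) = E[Z | σ(W)] with 0 < p(W) < 1 a.s., true conditional means μ₁(W), μ₀(W) as above, and ANY bounded σ(W)-measurable functions m₁, m₀, the score satisfies E[ m₁(W) − m₀(W) + Z·(Y − m₁(W))/p(W) − (1−Z)·(Y − m₀(W))/(1−p(W)) ] = E[ μ₁(W) − μ₀(W) ], assuming all terms are integrable. -/

import Mathlib

/-!
Conditioning on `σ(W)`, against which `m₁` and `1 / p` are measurable and bounded,
`E[Z (Y - m₁) / p | W] = (E[Y Z | W] - m₁ p) / p = μ₁ - m₁` since `p = E[Z | W]`: the weighted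
residual cancels the outcome model exactly, whatever `m₁` is. The control arm is the same
computation with `Z, p` replaced by `1 - Z, 1 - p`.
-/

open MeasureTheory ProbabilityTheory MeasurableSpace

section

variable {Ω : Type*} {m m0 : MeasurableSpace Ω} {μ : Measure Ω}

theorem integral_mul_condExp_of_bound [IsFiniteMeasure μ] (hm : m ≤ m0) {f g : Ω → ℝ}
    (hf : StronglyMeasurable[m] f) {c : ℝ} (hfc : ∀ᵐ ω ∂μ, ‖f ω‖ ≤ c) (hg : Integrable g μ) :
    ∫ ω, f ω * g ω ∂μ = ∫ ω, f ω * μ[g|m] ω ∂μ := by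
  rw [← integral_condExp hm]
  exact integral_congr_ae (condExp_stronglyMeasurable_mul_of_bound hm hf hg c hfc)

theorem ae_norm_inv_le_inv {q : Ω → ℝ} {ε : ℝ} (hε : 0 < ε) (hqε : ∀ᵐ ω ∂μ, ε ≤ q ω) :
    ∀ᵐ ω ∂μ, ‖(q ω)⁻¹‖ ≤ ε⁻¹ := by
  filter_upwards [hqε] with ω h
  rw [norm_inv, Real.norm_of_nonneg (hε.le.trans h)]
  exact inv_anti₀ hε h

theorem MeasureTheory.Integrable.div_of_le {f q : Ω → ℝ} {ε : ℝ} (hf : Integrable f μ)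
    (hq : AEStronglyMeasurable q μ) (hε : 0 < ε) (hqε : ∀ᵐ ω ∂μ, ε ≤ q ω) :
    Integrable (fun ω => f ω / q ω) μ := by
  simpa only [div_eq_inv_mul, Pi.inv_apply] using
    hf.bdd_mul hq.aemeasurable.inv.aestronglyMeasurable (ae_norm_inv_le_inv hε hqε)

/-- Augmented inverse-propensity-weighted outcome of one arm, with indicator `T`, propensity `q`
and outcome model `g`. -/
noncomputable def aipw (T Y g q : Ω → ℝ) (ω : Ω) : ℝ := g ω + T ω * (Y ω - g ω) / q ω

variable {T Y g q : Ω → ℝ} {ε C : ℝ}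

theorem integrable_mul_sub_of_bound (hT : Integrable T μ)
    (hYT : Integrable (fun ω => Y ω * T ω) μ) (hg : AEStronglyMeasurable g μ)
    (hgC : ∀ᵐ ω ∂μ, ‖g ω‖ ≤ C) : Integrable (fun ω => T ω * (Y ω - g ω)) μ := by
  refine (hYT.sub (hT.bdd_mul hg hgC)).congr (ae_of_all _ fun ω => ?_)
  simp only [Pi.sub_apply]
  ring

variable [IsFiniteMeasure μ]

theorem integrable_aipw (hm : m ≤ m0) (hq : StronglyMeasurable[m] q) (hε : 0 < ε)
    (hqε : ∀ᵐ ω ∂μ, ε ≤ q ω) (hg : StronglyMeasurable[m] g) (hgC : ∀ᵐ ω ∂μ, ‖g ω‖ ≤ C)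
    (hT : Integrable T μ) (hYT : Integrable (fun ω => Y ω * T ω) μ) :
    Integrable (aipw T Y g q) μ :=
  (Integrable.of_bound (hg.mono hm).aestronglyMeasurable C hgC).add
    ((integrable_mul_sub_of_bound hT hYT (hg.mono hm).aestronglyMeasurable hgC).div_of_le
      (hq.mono hm).aestronglyMeasurable hε hqε)

theorem integral_aipw (hm : m ≤ m0) (hq : StronglyMeasurable[m] q) (hqT : q =ᵐ[μ] μ[T|m])
    (hε : 0 < ε) (hqε : ∀ᵐ ω ∂μ, ε ≤ q ω) (hg : StronglyMeasurable[m] g)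
    (hgC : ∀ᵐ ω ∂μ, ‖g ω‖ ≤ C) (hT : Integrable T μ) (hYT : Integrable (fun ω => Y ω * T ω) μ) :
    ∫ ω, aipw T Y g q ω ∂μ = ∫ ω, μ[fun ω => Y ω * T ω|m] ω / q ω ∂μ := by
  have hgT : Integrable (g * T) μ :=
    hT.bdd_mul (hg.mono hm).aestronglyMeasurable hgC
  have hres_int : Integrable (fun ω => T ω * (Y ω - g ω)) μ :=
    integrable_mul_sub_of_bound hT hYT (hg.mono hm).aestronglyMeasurable hgC
  have hres : μ[fun ω => T ω * (Y ω - g ω)|m]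
      =ᵐ[μ] fun ω => μ[fun ω => Y ω * T ω|m] ω - g ω * q ω := by
    have hsplit : (fun ω => T ω * (Y ω - g ω)) = (fun ω => Y ω * T ω) - g * T := by
      ext ω; simp only [Pi.sub_apply, Pi.mul_apply]; ring
    rw [hsplit]
    filter_upwards [condExp_sub hYT hgT m,
      condExp_stronglyMeasurable_mul_of_bound hm hg hT C hgC, hqT] with ω hsub hpull hqω
    rw [hsub, Pi.sub_apply, hpull, Pi.mul_apply, hqω]
  have hq0 : ∀ᵐ ω ∂μ, q ω ≠ 0 := by
    filter_upwards [hqε] with ω h using (hε.trans_le h).ne'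
  have hg_int : Integrable g μ := .of_bound (hg.mono hm).aestronglyMeasurable C hgC
  have hqinv : StronglyMeasurable[m] fun ω => (q ω)⁻¹ := hq.measurable.inv.stronglyMeasurable
  calc ∫ ω, aipw T Y g q ω ∂μ = ∫ ω, g ω ∂μ + ∫ ω, T ω * (Y ω - g ω) / q ω ∂μ :=
        integral_add hg_int (hres_int.div_of_le (hq.mono hm).aestronglyMeasurable hε hqε)
    _ = ∫ ω, g ω ∂μ + ∫ ω, (q ω)⁻¹ * μ[fun ω => T ω * (Y ω - g ω)|m] ω ∂μ := by
        simp_rw [div_eq_inv_mul]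
        rw [integral_mul_condExp_of_bound hm hqinv (ae_norm_inv_le_inv hε hqε) hres_int]
    _ = ∫ ω, g ω ∂μ + ∫ ω, (μ[fun ω => Y ω * T ω|m] ω / q ω - g ω) ∂μ := by
        congr 1
        refine integral_congr_ae ?_
        filter_upwards [hres, hq0] with ω hω hqω
        rw [hω]
        field_simp
    _ = ∫ ω, μ[fun ω => Y ω * T ω|m] ω / q ω ∂μ := by
        rw [integral_sub _ hg_int, add_sub_cancel]
        exact Integrable.div_of_le integrable_condExp (hq.mono hm).aestronglyMeasurable hε hqε


theorem condExp_one_sub {Z : Ω → ℝ} (hm : m ≤ m0) (hZ : Integrable Z μ) :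
    μ[fun ω => 1 - Z ω|m] =ᵐ[μ] fun ω => 1 - μ[Z|m] ω := by
  filter_upwards [condExp_sub (integrable_const 1) hZ m] with ω h
  rw [condExp_const hm, Pi.sub_apply] at h
  exact h

theorem integral_aipw_sub_aipw {Z Y p g₁ g₀ : Ω → ℝ} {C₁ C₀ : ℝ} (hm : m ≤ m0)
    (hp : StronglyMeasurable[m] p) (hpZ : p =ᵐ[μ] μ[Z|m]) (hε : 0 < ε)
    (hpε : ∀ᵐ ω ∂μ, ε ≤ p ω) (h1pε : ∀ᵐ ω ∂μ, ε ≤ 1 - p ω)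
    (hg₁ : StronglyMeasurable[m] g₁) (hg₁C : ∀ᵐ ω ∂μ, ‖g₁ ω‖ ≤ C₁)
    (hg₀ : StronglyMeasurable[m] g₀) (hg₀C : ∀ᵐ ω ∂μ, ‖g₀ ω‖ ≤ C₀)
    (hZ : Integrable Z μ) (hY : Integrable Y μ) (hYZ : Integrable (fun ω => Y ω * Z ω) μ) :
    ∫ ω, (aipw Z Y g₁ p ω - aipw (fun ω => 1 - Z ω) Y g₀ (fun ω => 1 - p ω) ω) ∂μ
      = ∫ ω, (μ[fun ω => Y ω * Z ω|m] ω / p ω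
          - μ[fun ω => Y ω * (1 - Z ω)|m] ω / (1 - p ω)) ∂μ := by
  have h1p : StronglyMeasurable[m] fun ω => 1 - p ω :=
    (measurable_const.sub hp.measurable).stronglyMeasurable
  have h1pZ : (fun ω => 1 - p ω) =ᵐ[μ] μ[fun ω => 1 - Z ω|m] := by
    filter_upwards [hpZ, condExp_one_sub hm hZ] with ω hω h1ω
    rw [hω, h1ω]
  have h1Z : Integrable (fun ω => 1 - Z ω) μ := (integrable_const 1).sub hZ
  have hY1Z : Integrable (fun ω => Y ω * (1 - Z ω)) μ := by
    simpa only [mul_sub, mul_one] using hY.sub' hYZ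
  rw [integral_sub (integrable_aipw hm hp hε hpε hg₁ hg₁C hZ hYZ)
      (integrable_aipw hm h1p hε h1pε hg₀ hg₀C h1Z hY1Z),
    integral_sub (integrable_condExp.div_of_le (hp.mono hm).aestronglyMeasurable hε hpε)
      (integrable_condExp.div_of_le (h1p.mono hm).aestronglyMeasurable hε h1pε),
    integral_aipw hm hp hpZ hε hpε hg₁ hg₁C hZ hYZ,
    integral_aipw hm h1p h1pZ hε h1pε hg₀ hg₀C h1Z hY1Z]

end

theorem doubly_robust_correct_propensity_model_general
    {Ω δ : Type*} [MeasurableSpace Ω] [MeasurableSpace δ]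
    (μ : Measure Ω) [IsProbabilityMeasure μ]
    (Z : Ω → ℝ) (Y : Ω → ℝ) (W : Ω → δ)
    (hZ : Measurable Z) (hZ01 : ∀ ω, Z ω = 0 ∨ Z ω = 1)
    (hY : Measurable Y) (CY : ℝ) (hYbd : ∀ ω, |Y ω| ≤ CY) (hW : Measurable W)
    (p : Ω → ℝ) (hpdef : p = μ[Z | MeasurableSpace.comap W inferInstance])
    (ε : ℝ) (hε : 0 < ε) (hp : ∀ᵐ ω ∂μ, ε ≤ p ω ∧ p ω ≤ 1 - ε)
    (μ₁ μ₀ : Ω → ℝ)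
    (hμ₁def : μ₁ = fun ω =>
      (μ[fun ω' => Y ω' * Z ω' | MeasurableSpace.comap W inferInstance]) ω / p ω)
    (hμ₀def : μ₀ = fun ω =>
      (μ[fun ω' => Y ω' * (1 - Z ω') | MeasurableSpace.comap W inferInstance]) ω / (1 - p ω))
    (m₁ m₀ : Ω → ℝ)
    (hm₁_meas : Measurable[MeasurableSpace.comap W inferInstance] m₁)
    (hm₀_meas : Measurable[MeasurableSpace.comap W inferInstance] m₀)
    (C₁ : ℝ) (hm₁bd : ∀ ω, |m₁ ω| ≤ C₁)
    (C₀ : ℝ) (hm₀bd : ∀ ω, |m₀ ω| ≤ C₀) :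
    ∫ ω, (m₁ ω - m₀ ω + Z ω * (Y ω - m₁ ω) / p ω
        - (1 - Z ω) * (Y ω - m₀ ω) / (1 - p ω)) ∂μ
      = ∫ ω, (μ₁ ω - μ₀ ω) ∂μ := by
  have hm : MeasurableSpace.comap W inferInstance ≤ ‹MeasurableSpace Ω› := hW.comap_le
  have hp_meas : StronglyMeasurable[MeasurableSpace.comap W inferInstance] p :=
    hpdef ▸ stronglyMeasurable_condExp
  have hZ_bd : ∀ᵐ ω ∂μ, ‖Z ω‖ ≤ 1 := ae_of_all _ fun ω => by rcases hZ01 ω with h | h <;> simp [h]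
  have hY_int : Integrable Y μ := .of_bound hY.aestronglyMeasurable CY (ae_of_all _ hYbd)
  have harms := integral_aipw_sub_aipw hm hp_meas (.of_eq hpdef) hε (hp.mono fun _ h => h.1)
    (hp.mono fun _ h => by linarith [h.2]) hm₁_meas.stronglyMeasurable (ae_of_all _ hm₁bd)
    hm₀_meas.stronglyMeasurable (ae_of_all _ hm₀bd)
    (.of_bound hZ.aestronglyMeasurable 1 hZ_bd) hY_int
    (hY_int.mul_bdd hZ.aestronglyMeasurable hZ_bd)
  subst hμ₁def hμ₀def
  convert harms using 1
  congr with ω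
  simp only [aipw]
  ring

/-- Doubly robust moment identity (correct propensity model): with the true propensity score
`p(W) = E[Z | σ(W)] ∈ (ε, 1−ε)` a.s. and arbitrary bounded `σ(W)`-measurable outcome models
`m₁, m₀`, the doubly robust score has expectation `E[μ₁(W) − μ₀(W)]`. -/
theorem doubly_robust_correct_propensity_model
    {Ω δ : Type*} [MeasurableSpace Ω] [MeasurableSpace δ]
    (μ : Measure Ω) [IsProbabilityMeasure μ]
    (Z : Ω → ℝ) (Y : Ω → ℝ) (W : Ω → δ)
    (hZ : Measurable Z) (hZ01 : ∀ ω, Z ω = 0 ∨ Z ω = 1)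
    (hY : Measurable Y) (CY : ℝ) (hYbd : ∀ ω, |Y ω| ≤ CY) (hW : Measurable W)
    (p : Ω → ℝ) (hpdef : p = μ[Z | MeasurableSpace.comap W inferInstance])
    (ε : ℝ) (hε : 0 < ε) (hp : ∀ᵐ ω ∂μ, ε ≤ p ω ∧ p ω ≤ 1 - ε)
    (μ₁ μ₀ : Ω → ℝ)
    (hμ₁def : μ₁ = fun ω =>
      (μ[fun ω' => Y ω' * Z ω' | MeasurableSpace.comap W inferInstance]) ω / p ω)
    (hμ₀def : μ₀ = fun ω =>
      (μ[fun ω' => Y ω' * (1 - Z ω') | MeasurableSpace.comap W inferInstance]) ω / (1 - p ω))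
    (m₁ m₀ : Ω → ℝ)
    (hm₁_meas : Measurable[MeasurableSpace.comap W inferInstance] m₁)
    (hm₀_meas : Measurable[MeasurableSpace.comap W inferInstance] m₀)
    (C₁ : ℝ) (hm₁bd : ∀ ω, |m₁ ω| ≤ C₁)
    (C₀ : ℝ) (hm₀bd : ∀ ω, |m₀ ω| ≤ C₀)
    (hscore_int : Integrable (fun ω => m₁ ω - m₀ ω + Z ω * (Y ω - m₁ ω) / p ω
      - (1 - Z ω) * (Y ω - m₀ ω) / (1 - p ω)) μ)
    (hμdiff_int : Integrable (fun ω => μ₁ ω - μ₀ ω) μ) :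
    ∫ ω, (m₁ ω - m₀ ω + Z ω * (Y ω - m₁ ω) / p ω
        - (1 - Z ω) * (Y ω - m₀ ω) / (1 - p ω)) ∂μ
      = ∫ ω, (μ₁ ω - μ₀ ω) ∂μ :=
  doubly_robust_correct_propensity_model_general μ Z Y W hZ hZ01 hY CY hYbd hW p hpdef ε hε hp μ₁ μ₀
    hμ₁def hμ₀def m₁ m₀ hm₁_meas hm₀_meas C₁ hm₁bd C₀ hm₀bd
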